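/- Let a > 0 and A ∈ ℝ, and define g(u) = e^{−A²u/2} · Σ_{n∈ℤ} (−1)^n e^{−n²a²/(2u)} for u > 0. Then ∫_0^∞ u^{−3/2} ( √(g(u)) − 1 )² du < ∞. (This establishes that the Meixner time-change subordinator, whose Lévy density is (δa/√(2πu³)) g(u), is absolutely continuous with respect to the one-sided stable 1/2 subordinator, whose Lévy density is proportional to u^{−3/2}.) -/

import Mathlib

open MeasureTheory Real Set

/-!
Write `g(u) = e^{-A²u/2} θ(a²/(2u))` with `θ(t) = Σ_{n∈ℤ} (-1)^n e^{-t n²}`. The terms of the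
alternating series `θ(t)` decrease in `|n|`, so `1 - 2e^{-t} ≤ θ(t) ≤ 1`; with `e^{-t} ≤ 1/t`
this gives `g(u) ≤ 1` and `1 - g(u) ≤ C u`. Since `(√g - 1)² ≤ min 1 (1 - g)` for `g ≤ 1`, the
integrand is at most `min (u^{-3/2}) (C u^{-1/2})`, which is integrable on `(0, ∞)`.
-/

lemma Antitone.tsum_int_alternating_natAbs_mem_Icc {f : ℕ → ℝ} (hf : Antitone f)
    (hs : Summable f) :
    ∑' n : ℤ, (-1 : ℝ) ^ n * f n.natAbs ∈ Icc (f 0 - 2 * f 1) (f 0) := by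
  obtain ⟨L, hL⟩ := hs.alternating
  have hL_ge : f 0 - f 1 ≤ L := by
    simpa [Finset.sum_range_succ] using hf.alternating_series_le_tendsto hL.tendsto_sum_nat 1
  have hL_le : L ≤ f 0 := by
    simpa using hf.tendsto_le_alternating_series hL.tendsto_sum_nat 0
  have hpos : HasSum (fun n : ℕ => (-1 : ℝ) ^ (n : ℤ) * f (n : ℤ).natAbs) L := by
    simpa using hL
  have hneg : HasSum (fun n : ℕ => (-1 : ℝ) ^ (-(n : ℤ)) * f (-(n : ℤ)).natAbs) L := by
    simpa [zpow_neg, ← inv_pow] using hL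
  rw [(HasSum.of_nat_of_neg (f := fun n : ℤ => (-1 : ℝ) ^ n * f n.natAbs) hpos hneg).tsum_eq]
  simp only [zpow_zero, one_mul, Int.natAbs_zero, mem_Icc]
  constructor <;> linarith

lemma Real.exp_neg_le_inv {x : ℝ} (hx : 0 < x) : exp (-x) ≤ x⁻¹ := by
  rw [exp_neg]
  exact inv_anti₀ hx ((le_add_of_nonneg_right zero_le_one).trans (add_one_le_exp x))

noncomputable def altTheta (t : ℝ) : ℝ := ∑' n : ℤ, (-1 : ℝ) ^ n * exp (-t * (n : ℝ) ^ 2)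

lemma altTheta_mem_Icc {t : ℝ} (ht : 0 < t) : altTheta t ∈ Icc (1 - 2 * exp (-t)) 1 := by
  have hf : Antitone fun n : ℕ => exp (-t * (n : ℝ) ^ 2) := fun i j hij =>
    exp_le_exp.2 (mul_le_mul_of_nonpos_left (by gcongr) (neg_nonpos.2 ht.le))
  have hs : Summable fun n : ℕ => exp (-t * (n : ℝ) ^ 2) :=
    summable_exp_nat_mul_of_ge (neg_lt_zero.2 ht) fun i => by
      exact_mod_cast Nat.le_self_pow two_ne_zero i
  simpa [altTheta, Nat.cast_natAbs] using hf.tsum_int_alternating_natAbs_mem_Icc hs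

noncomputable def meixnerRatio (a A u : ℝ) : ℝ :=
  exp (-(A ^ 2 * u / 2)) * ∑' n : ℤ, (-1 : ℝ) ^ n * exp (-((n : ℝ) ^ 2 * a ^ 2) / (2 * u))

lemma meixnerRatio_eq (a A u : ℝ) :
    meixnerRatio a A u = exp (-(A ^ 2 * u / 2)) * altTheta (a ^ 2 / (2 * u)) := by
  unfold meixnerRatio altTheta
  congr 1
  exact tsum_congr fun n => by ring_nf

lemma meixnerRatio_le_one (a A : ℝ) {u : ℝ} (ha : a ≠ 0) (hu : 0 < u) :
    meixnerRatio a A u ≤ 1 := by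
  rw [meixnerRatio_eq]
  have hθ := (altTheta_mem_Icc (t := a ^ 2 / (2 * u)) (by positivity)).2
  have hE : exp (-(A ^ 2 * u / 2)) ≤ 1 := exp_le_one_iff.2 (neg_nonpos.2 (by positivity))
  exact (mul_le_of_le_one_right (exp_pos _).le hθ).trans hE

lemma one_sub_meixnerRatio_le (a A : ℝ) {u : ℝ} (ha : a ≠ 0) (hu : 0 < u) :
    1 - meixnerRatio a A u ≤ (A ^ 2 / 2 + 4 / a ^ 2) * u := by
  set t := a ^ 2 / (2 * u)
  have ht : 0 < t := by positivity
  obtain ⟨hθ_ge, hθ_le⟩ := altTheta_mem_Icc ht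
  have hq : exp (-t) ≤ 2 * u / a ^ 2 := by simpa [t] using exp_neg_le_inv ht
  set E := exp (-(A ^ 2 * u / 2))
  have hE_le : E ≤ 1 := exp_le_one_iff.2 (neg_nonpos.2 (by positivity))
  have hE_ge : 1 - A ^ 2 * u / 2 ≤ E := by linarith [add_one_le_exp (-(A ^ 2 * u / 2))]
  have hEθ : E * (1 - altTheta t) ≤ 1 - altTheta t :=
    mul_le_of_le_one_left (by linarith) hE_le
  have h4 : 4 / a ^ 2 * u = 2 * (2 * u / a ^ 2) := by ring
  rw [meixnerRatio_eq]
  linarith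

lemma sq_sqrt_sub_one_le_min {x : ℝ} (hx : x ≤ 1) : (√x - 1) ^ 2 ≤ min 1 (1 - x) := by
  rcases le_or_gt x 0 with hx0 | hx0
  · rw [sqrt_eq_zero'.2 hx0]
    exact le_min (by norm_num) (by linarith)
  · have hs : √x ≤ 1 := sqrt_le_one.2 hx
    have hsq : √x ^ 2 = x := sq_sqrt hx0.le
    exact le_min (by nlinarith [sqrt_nonneg x]) (by nlinarith [sqrt_nonneg x])

lemma lintegral_rpow_neg_mul_lt_top_of_le_min {s C : ℝ} (hs₁ : 1 < s) (hs₂ : s < 2)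
    {f : ℝ → ℝ} (hf : ∀ u, 0 < u → f u ≤ min 1 (C * u)) :
    ∫⁻ u in Ioi 0, ENNReal.ofReal (u ^ (-s) * f u) < ⊤ := by
  have hnear : ∫⁻ u in Ioc 0 1, ENNReal.ofReal (u ^ (-s) * f u) < ⊤ := by
    refine lt_of_le_of_lt (setLIntegral_mono' measurableSet_Ioc fun u hu => ?_)
      (((intervalIntegral.intervalIntegrable_rpow' (a := 0) (b := 1)
        (by linarith : -1 < 1 - s)).1.const_mul C).lintegral_lt_top)
    have hu₀ : 0 < u := hu.1
    refine ENNReal.ofReal_le_ofReal ?_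
    calc u ^ (-s) * f u ≤ u ^ (-s) * (C * u) :=
          mul_le_mul_of_nonneg_left ((hf u hu₀).trans (min_le_right _ _)) (rpow_nonneg hu₀.le _)
      _ = C * u ^ (1 - s) := by rw [show 1 - s = -s + 1 by ring, rpow_add_one hu₀.ne']; ring
  have hfar : ∫⁻ u in Ioi 1, ENNReal.ofReal (u ^ (-s) * f u) < ⊤ := by
    refine lt_of_le_of_lt (setLIntegral_mono' measurableSet_Ioi fun u hu => ?_)
      ((integrableOn_Ioi_rpow_of_lt (by linarith : -s < -1) one_pos).lintegral_lt_top)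
    have hu₀ : 0 < u := zero_lt_one.trans hu
    exact ENNReal.ofReal_le_ofReal (mul_le_of_le_one_right (rpow_nonneg hu₀.le _)
      ((hf u hu₀).trans (min_le_left _ _)))
  rw [← Ioc_union_Ioi_eq_Ioi zero_le_one]
  exact (lintegral_union_le _ _ _).trans_lt (ENNReal.add_lt_top.2 ⟨hnear, hfar⟩)

theorem meixner_subordinator_absolutely_continuous (a A : ℝ) (ha : 0 < a) :
    ∫⁻ u in Ioi (0:ℝ),
        ENNReal.ofReal (u ^ (-(3/2) : ℝ) *
          (Real.sqrt (Real.exp (-(A^2 * u / 2)) *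
              ∑' n : ℤ, (-1 : ℝ) ^ n * Real.exp (-((n:ℝ)^2 * a^2) / (2*u))) - 1)^2) < ⊤ := by
  refine lintegral_rpow_neg_mul_lt_top_of_le_min (by norm_num) (by norm_num)
    (f := fun u => (√(meixnerRatio a A u) - 1) ^ 2) (C := A ^ 2 / 2 + 4 / a ^ 2) fun u hu => ?_
  refine (sq_sqrt_sub_one_le_min (meixnerRatio_le_one a A ha.ne' hu)).trans ?_
  exact min_le_min_left _ (one_sub_meixnerRatio_le a A ha.ne' hu)
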